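/- Upper bound on tainted shipments used by the greedy inspection heuristic: let L, C be finite sets and fix a scenario s. Suppose x_l ∈ {0,1}, z_{ls} ∈ {0,1}, 0 ≤ r_{ls} ≤ q_{ls} ≤ 1, κ_l ≥ 0, and nonnegative reals p_{lcs}, k_{lcs}, d_{lcs} satisfy, for every l and c: ∑_{c ∈ C} ((1 − q_{ls})·p_{lcs} + k_{lcs} + d_{lcs}) ≤ κ_l·x_l, k_{lcs} + d_{lcs} = q_{ls}·p_{lcs}, and k_{lcs} ≤ r_{ls}·p_{lcs} whenever z_{ls} = 1. Then the total quantity of tainted products shipped satisfies ∑_{l ∈ L} ∑_{c ∈ C} k_{lcs} ≤ ∑_{l ∈ L} (q_{ls}·(1 − z_{ls}) + r_{ls}·z_{ls})·κ_l·x_l. -/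

import Mathlib

/-! Facility by facility: the balance constraint `k + d = q p` makes the capacity constraint
read `∑_c p ≤ κ x`. Without inspection `k ≤ q p` because `d ≥ 0`, with inspection `k ≤ r p`,
so the tainted shipments of a facility are at most its rate `q (1 - z) + r z` times `κ x`. -/

open Finset

section Facility

variable {C : Type*} (s : Finset C) {q r z : ℝ} {p k d : C → ℝ}

theorem sum_capacity_use_eq_of_balance (hbal : ∀ c, k c + d c = q * p c) :
    ∑ c ∈ s, ((1 - q) * p c + k c + d c) = ∑ c ∈ s, p c :=
  sum_congr rfl fun c _ => by linear_combination hbal c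

theorem inspection_rate_nonneg (hz : z = 0 ∨ z = 1) (hr0 : 0 ≤ r) (hrq : r ≤ q) :
    0 ≤ q * (1 - z) + r * z := by
  rcases hz with rfl | rfl <;> linarith

theorem sum_tainted_le_inspection_rate_mul (hz : z = 0 ∨ z = 1)
    (hd : ∀ c, 0 ≤ d c) (hbal : ∀ c, k c + d c = q * p c)
    (hins : ∀ c, z = 1 → k c ≤ r * p c) :
    ∑ c ∈ s, k c ≤ (q * (1 - z) + r * z) * ∑ c ∈ s, p c := by
  rw [mul_sum]
  refine sum_le_sum fun c _ => ?_
  rcases hz with rfl | rfl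
  · linarith [hbal c, hd c]
  · linarith [hins c rfl]

end Facility

theorem tainted_shipment_upper_bound_general {L C : Type*} [Fintype L] [Fintype C]
    (x z q r κ : L → ℝ)
    (p k d : L → C → ℝ)
    (hz : ∀ l, z l = 0 ∨ z l = 1)
    (hr0 : ∀ l, 0 ≤ r l) (hrq : ∀ l, r l ≤ q l)
    (hd : ∀ l c, 0 ≤ d l c)
    (hcap : ∀ l, ∑ c, ((1 - q l) * p l c + k l c + d l c) ≤ κ l * x l)
    (hbal : ∀ l c, k l c + d l c = q l * p l c)
    (hins : ∀ l c, z l = 1 → k l c ≤ r l * p l c) :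
    ∑ l, ∑ c, k l c ≤ ∑ l, (q l * (1 - z l) + r l * z l) * κ l * x l := by
  refine sum_le_sum fun l _ => ?_
  have hshipped : ∑ c, p l c ≤ κ l * x l :=
    sum_capacity_use_eq_of_balance univ (hbal l) ▸ hcap l
  calc ∑ c, k l c ≤ (q l * (1 - z l) + r l * z l) * ∑ c, p l c :=
        sum_tainted_le_inspection_rate_mul univ (hz l) (hd l) (hbal l) (hins l)
    _ ≤ (q l * (1 - z l) + r l * z l) * (κ l * x l) :=
        mul_le_mul_of_nonneg_left hshipped (inspection_rate_nonneg (hz l) (hr0 l) (hrq l))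
    _ = (q l * (1 - z l) + r l * z l) * κ l * x l := (mul_assoc _ _ _).symm

/-- Upper bound on tainted shipments used by the greedy inspection
heuristic (fixed scenario): under the capacity constraint, the balance constraint, and
the inspection constraint `k ≤ r·p` when `z = 1`, the total tainted quantity shipped
satisfies `∑_l ∑_c k_{lc} ≤ ∑_l (q_l·(1 − z_l) + r_l·z_l)·κ_l·x_l`. -/
theorem tainted_shipment_upper_bound {L C : Type*} [Fintype L] [Fintype C]
    (x z q r κ : L → ℝ)
    (p k d : L → C → ℝ)
    (hx : ∀ l, x l = 0 ∨ x l = 1)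
    (hz : ∀ l, z l = 0 ∨ z l = 1)
    (hr0 : ∀ l, 0 ≤ r l) (hrq : ∀ l, r l ≤ q l) (hq1 : ∀ l, q l ≤ 1)
    (hκ : ∀ l, 0 ≤ κ l)
    (hp : ∀ l c, 0 ≤ p l c) (hk : ∀ l c, 0 ≤ k l c) (hd : ∀ l c, 0 ≤ d l c)
    (hcap : ∀ l, ∑ c, ((1 - q l) * p l c + k l c + d l c) ≤ κ l * x l)
    (hbal : ∀ l c, k l c + d l c = q l * p l c)
    (hins : ∀ l c, z l = 1 → k l c ≤ r l * p l c) :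
    ∑ l, ∑ c, k l c ≤ ∑ l, (q l * (1 - z l) + r l * z l) * κ l * x l :=
  tainted_shipment_upper_bound_general x z q r κ p k d hz hr0 hrq hd hcap hbal hins
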